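/- (Alignment Lemma.) Let E = [U V] be a 2×2 real matrix with det E > 0, let d ∈ ℝ² be a nonzero vector, N a positive integer, and n an even divisor of N. Identify ℝ² with ℂ. If Im((E^{-1} d)^{n/2}) = 0, then there exists an N-th root of unity ω and a real α > 0 such that E(ω) = α d, i.e. one of the pushed-forward grid directions E(ω_l), where ω_l are the N-th roots of unity viewed as vectors in ℝ², is a positive multiple of d. -/

import Mathlib

open Matrix Complex

/-- Identification of ℝ² with ℂ: `(x,y) ↦ x + iy`. -/
noncomputable def toC (v : Fin 2 → ℝ) : ℂ := v 0 + v 1 * Complex.I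

/-!
Put `z = E⁻¹ d`, read as a complex number; it is nonzero because `d` is. Since `z^(n/2)` is
real, the unit vector `ω = z / ‖z‖` has `ω^(n/2) = ±1`, so `ω^n = 1` and hence `ω^N = 1`.
By linearity `E ω = ‖z‖⁻¹ E (E⁻¹ d) = ‖z‖⁻¹ d`.
-/

@[simp]
lemma toC_re (v : Fin 2 → ℝ) : (toC v).re = v 0 := by
  simp [toC]

@[simp]
lemma toC_im (v : Fin 2 → ℝ) : (toC v).im = v 1 := by
  simp [toC]

lemma vec_re_im_toC (v : Fin 2 → ℝ) : ![(toC v).re, (toC v).im] = v := by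
  ext i
  fin_cases i <;> simp

lemma toC_ne_zero {v : Fin 2 → ℝ} (hv : v ≠ 0) : toC v ≠ 0 := by
  intro h
  apply hv
  rw [← vec_re_im_toC v, h]
  simp

lemma vec_re_im_real_smul (c : ℝ) (z : ℂ) : ![(c • z).re, (c • z).im] = c • ![z.re, z.im] := by
  ext i
  fin_cases i <;> simp

lemma Matrix.mulVec_nonsing_inv_mulVec {m R : Type*} [Fintype m] [DecidableEq m] [CommRing R]
    {A : Matrix m m R} (hA : IsUnit A.det) (v : m → R) : A *ᵥ (A⁻¹ *ᵥ v) = v := by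
  rw [mulVec_mulVec, mul_nonsing_inv _ hA, one_mulVec]

namespace Complex

lemma sq_eq_one_of_norm_eq_one_of_im_eq_zero {w : ℂ} (h1 : ‖w‖ = 1) (h0 : w.im = 0) :
    w ^ 2 = 1 := by
  have hre : w.re ^ 2 = 1 := by
    rw [← sq_abs, abs_re_eq_norm.mpr h0, h1, one_pow]
  apply Complex.ext <;> simp [sq, h0, ← hre]

lemma inv_norm_smul_pow_two_mul_eq_one {z : ℂ} (hz : z ≠ 0) {m : ℕ}
    (h : (z ^ m).im = 0) : (‖z‖⁻¹ • z) ^ (2 * m) = 1 := by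
  have hnorm : ‖(‖z‖⁻¹ • z) ^ m‖ = 1 := by
    rw [norm_pow, norm_smul, norm_inv, norm_norm, inv_mul_cancel₀ (norm_ne_zero_iff.mpr hz),
      one_pow]
  have him : ((‖z‖⁻¹ • z) ^ m).im = 0 := by
    rw [smul_pow, smul_im, h, smul_zero]
  rw [pow_mul', sq_eq_one_of_norm_eq_one_of_im_eq_zero hnorm him]

end Complex

theorem stmt6_general (N n : ℕ) (hn : Even n) (hdvd : n ∣ N)
    (E : Matrix (Fin 2) (Fin 2) ℝ) (hdet : 0 < E.det)
    (d : Fin 2 → ℝ) (hd : d ≠ 0)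
    (halign : ((toC (E⁻¹ *ᵥ d)) ^ (n / 2)).im = 0) :
    ∃ ω : ℂ, ω ^ N = 1 ∧ ∃ α : ℝ, 0 < α ∧ E *ᵥ ![ω.re, ω.im] = α • d := by
  have hEd : E *ᵥ (E⁻¹ *ᵥ d) = d := mulVec_nonsing_inv_mulVec hdet.ne'.isUnit d
  set z := toC (E⁻¹ *ᵥ d)
  have hz : z ≠ 0 := toC_ne_zero fun h ↦ hd (by rw [← hEd, h, mulVec_zero])
  refine ⟨‖z‖⁻¹ • z, ?_, ‖z‖⁻¹, by positivity, ?_⟩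
  · obtain ⟨m, rfl⟩ := hn.two_dvd
    obtain ⟨k, rfl⟩ := hdvd
    rw [Nat.mul_div_cancel_left m two_pos] at halign
    rw [pow_mul, inv_norm_smul_pow_two_mul_eq_one hz halign, one_pow]
  · rw [vec_re_im_real_smul, vec_re_im_toC, mulVec_smul, hEd]

/-- (Alignment Lemma.) Let `E = [U V]` have positive determinant, `d ≠ 0`,
`n` an even divisor of `N`. If `Im((E⁻¹d)^{n/2}) = 0`, then one of the pushed-forward
grid directions `E(ω)`, `ω` an `N`-th root of unity (viewed as a vector in ℝ²), is a
positive multiple of `d`. -/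
theorem stmt6 (N n : ℕ) (hN : 0 < N) (hn : Even n) (hdvd : n ∣ N) (hnpos : 0 < n)
    (E : Matrix (Fin 2) (Fin 2) ℝ) (hdet : 0 < E.det)
    (d : Fin 2 → ℝ) (hd : d ≠ 0)
    (halign : ((toC (E⁻¹ *ᵥ d)) ^ (n / 2)).im = 0) :
    ∃ ω : ℂ, ω ^ N = 1 ∧ ∃ α : ℝ, 0 < α ∧ E *ᵥ ![ω.re, ω.im] = α • d :=
  stmt6_general N n hn hdvd E hdet d hd halign
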